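/- Let A ∈ ℝ^{n×n} be symmetric positive definite, let S ∈ ℝ^{n×n_s} and R ∈ ℝ^{n_c×n} satisfy RS = 0, SᵀS = I_s, RRᵀ = I_c and n_s + n_c = n, and set P⋆ = (I − S(SᵀAS)⁻¹SᵀA)Rᵀ. Then the two-grid method consisting of exact coarse-grid correction with P⋆ followed by exact solution on the fine (S) variables is a direct method: (I − S(SᵀAS)⁻¹SᵀA)(I − P⋆(P⋆ᵀAP⋆)⁻¹P⋆ᵀA) = 0. -/

import Mathlib

/-!
Write `Π_X = X(XᵀAX)⁻¹XᵀA` for the `A`-orthogonal (Galerkin) projector onto the column space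
of `X` and `E = I − Π_S`. Since `SSᵀ + RᵀR = I` and `ES = 0`, we get `E = ERᵀR = P⋆R`, so the
columns of `E` lie in those of `P⋆`; and `P⋆ᵀAE = P⋆ᵀA` because `SᵀAP⋆ = SᵀAERᵀ = 0`. These two
facts force `Π_{P⋆} = E`, and the two-grid error propagator is `E(I − E) = 0` as `E` is
idempotent.
-/

open Matrix

namespace Matrix

section Galerkin

variable {K ι κ : Type*} [CommRing K] [Fintype ι] [Fintype κ] [DecidableEq κ]

noncomputable def galerkinProj (A : Matrix ι ι K) (X : Matrix ι κ K) : Matrix ι ι K :=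
  X * (Xᵀ * A * X)⁻¹ * Xᵀ * A

variable {A : Matrix ι ι K} {X : Matrix ι κ K}

theorem galerkinProj_mul (hX : IsUnit (Xᵀ * A * X).det) : galerkinProj A X * X = X :=
  calc galerkinProj A X * X = X * ((Xᵀ * A * X)⁻¹ * (Xᵀ * A * X)) := by
        simp only [galerkinProj, Matrix.mul_assoc]
    _ = X := by rw [nonsing_inv_mul _ hX, Matrix.mul_one]

theorem transpose_mul_mul_galerkinProj (hX : IsUnit (Xᵀ * A * X).det) :
    Xᵀ * A * galerkinProj A X = Xᵀ * A :=
  calc Xᵀ * A * galerkinProj A X = (Xᵀ * A * X) * (Xᵀ * A * X)⁻¹ * (Xᵀ * A) := by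
        simp only [galerkinProj, Matrix.mul_assoc]
    _ = Xᵀ * A := by rw [mul_nonsing_inv _ hX, Matrix.one_mul]

theorem isIdempotentElem_galerkinProj (hX : IsUnit (Xᵀ * A * X).det) :
    IsIdempotentElem (galerkinProj A X) :=
  calc galerkinProj A X * galerkinProj A X
        = X * (Xᵀ * A * X)⁻¹ * (Xᵀ * A * galerkinProj A X) := by
          simp only [galerkinProj, Matrix.mul_assoc]
    _ = galerkinProj A X := by
          rw [transpose_mul_mul_galerkinProj hX]; simp only [galerkinProj, Matrix.mul_assoc]

theorem transpose_mul_mul_galerkinProj_eq_zero {ν : Type*} [Fintype ν] (hA : Aᵀ = A)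
    {Y : Matrix ι ν K} (hXY : Xᵀ * A * Y = 0) : Yᵀ * A * galerkinProj A X = 0 := by
  have hYX : Yᵀ * A * X = 0 := by
    simpa [Matrix.transpose_mul, hA, Matrix.mul_assoc] using congrArg transpose hXY
  simp only [galerkinProj, ← Matrix.mul_assoc, hYX, Matrix.zero_mul]

theorem galerkinProj_eq_of_eq_mul {Q : Matrix ι ι K} (L : Matrix κ ι K)
    (hX : IsUnit (Xᵀ * A * X).det) (hQ : Q = X * L) (hXQ : Xᵀ * A * Q = Xᵀ * A) :
    galerkinProj A X = Q :=
  calc galerkinProj A X = X * (Xᵀ * A * X)⁻¹ * (Xᵀ * A * Q) := by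
        rw [hXQ]; simp only [galerkinProj, Matrix.mul_assoc]
    _ = X * ((Xᵀ * A * X)⁻¹ * (Xᵀ * A * X)) * L := by
        rw [hQ]; simp only [Matrix.mul_assoc]
    _ = Q := by rw [nonsing_inv_mul _ hX, Matrix.mul_one, hQ]

end Galerkin

theorem mul_transpose_add_transpose_mul_eq_one {K ι κ μ : Type*} [CommRing K]
    [Fintype ι] [Fintype κ] [Fintype μ] [DecidableEq ι] [DecidableEq κ] [DecidableEq μ]
    (e : ι ≃ κ ⊕ μ) {S : Matrix ι κ K} {R : Matrix μ ι K}
    (hS : Sᵀ * S = 1) (hR : R * Rᵀ = 1) (hRS : R * S = 0) : S * Sᵀ + Rᵀ * R = 1 := by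
  have hSR : Sᵀ * Rᵀ = 0 := by simpa [Matrix.transpose_mul] using congrArg transpose hRS
  rw [← fromCols_mul_fromRows, fromCols_mul_fromRows_eq_one_comm e, fromRows_mul_fromCols,
    hS, hR, hRS, hSR, fromBlocks_one]

theorem PosDef.isUnit_det_transpose_mul_mul {K ι κ : Type*} [Field K] [PartialOrder K]
    [StarRing K] [TrivialStar K] [Fintype ι] [Fintype κ] [DecidableEq κ]
    {A : Matrix ι ι K} (hA : A.PosDef) {X : Matrix ι κ K} {L : Matrix κ ι K}
    (hLX : L * X = 1) : IsUnit (Xᵀ * A * X).det := by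
  have hinj : Function.Injective X.mulVec :=
    Function.LeftInverse.injective (g := L.mulVec) fun v => by
      rw [mulVec_mulVec, hLX, one_mulVec]
  have := hA.conjTranspose_mul_mul_same hinj
  rw [conjTranspose_eq_transpose_of_trivial] at this
  exact (isUnit_iff_isUnit_det _).mp this.isUnit

section IdealInterpolation

variable {K ι κ μ : Type*} [CommRing K] [Fintype ι] [Fintype κ]
  [DecidableEq ι] [DecidableEq κ] [DecidableEq μ]
  {A : Matrix ι ι K} {S : Matrix ι κ K} {R : Matrix μ ι K}

theorem mul_one_sub_galerkinProj_mul_transpose (hRS : R * S = 0) (hR : R * Rᵀ = 1) :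
    R * ((1 - galerkinProj A S) * Rᵀ) = 1 := by
  have hRproj : R * galerkinProj A S = 0 := by
    simp only [galerkinProj, ← Matrix.mul_assoc, hRS, Matrix.zero_mul]
  rw [← Matrix.mul_assoc, Matrix.mul_sub, Matrix.mul_one, hRproj, sub_zero, hR]

theorem galerkinProj_eq_one_sub_galerkinProj [Fintype μ] {P : Matrix ι μ K}
    (hP : P = (1 - galerkinProj A S) * Rᵀ) (hA : Aᵀ = A) (hS : IsUnit (Sᵀ * A * S).det)
    (hPAP : IsUnit (Pᵀ * A * P).det) (hSR : S * Sᵀ + Rᵀ * R = 1) :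
    galerkinProj A P = 1 - galerkinProj A S := by
  subst hP
  set E := 1 - galerkinProj A S
  have hES : E * S = 0 := by rw [Matrix.sub_mul, Matrix.one_mul, galerkinProj_mul hS, sub_self]
  have hSAP : Sᵀ * A * (E * Rᵀ) = 0 := by
    rw [← Matrix.mul_assoc, Matrix.mul_sub, Matrix.mul_one, transpose_mul_mul_galerkinProj hS,
      sub_self, Matrix.zero_mul]
  refine galerkinProj_eq_of_eq_mul R hPAP ?_ ?_
  · calc E = E * (S * Sᵀ + Rᵀ * R) := by rw [hSR, Matrix.mul_one]
      _ = E * S * Sᵀ + E * Rᵀ * R := by simp only [Matrix.mul_add, Matrix.mul_assoc]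
      _ = E * Rᵀ * R := by rw [hES, Matrix.zero_mul, zero_add]
  · rw [Matrix.mul_sub, Matrix.mul_one, transpose_mul_mul_galerkinProj_eq_zero hA hSAP, sub_zero]

end IdealInterpolation

end Matrix

/-- With GAMG orthogonality conditions and `P⋆` the ideal interpolation, the two-grid
method consisting of exact coarse-grid correction with `P⋆` followed by exact solution
on the fine (`S`) variables is a direct method:
`(I − S(SᵀAS)⁻¹SᵀA)(I − P⋆(P⋆ᵀAP⋆)⁻¹P⋆ᵀA) = 0`. -/
theorem ideal_interpolation_two_grid_direct_method {n ns nc : ℕ}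
    (A : Matrix (Fin n) (Fin n) ℝ) (hA : A.PosDef)
    (S : Matrix (Fin n) (Fin ns) ℝ) (R : Matrix (Fin nc) (Fin n) ℝ)
    (hRS : R * S = 0) (hS : Sᵀ * S = 1) (hR : R * Rᵀ = 1)
    (hdim : ns + nc = n)
    (P : Matrix (Fin n) (Fin nc) ℝ)
    (hP : P = (1 - S * (Sᵀ * A * S)⁻¹ * Sᵀ * A) * Rᵀ) :
    (1 - S * (Sᵀ * A * S)⁻¹ * Sᵀ * A) * (1 - P * (Pᵀ * A * P)⁻¹ * Pᵀ * A) = 0 := by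
  change P = (1 - galerkinProj A S) * Rᵀ at hP
  change (1 - galerkinProj A S) * (1 - galerkinProj A P) = 0
  have hSAS : IsUnit (Sᵀ * A * S).det := hA.isUnit_det_transpose_mul_mul hS
  have hRP : R * P = 1 := hP ▸ mul_one_sub_galerkinProj_mul_transpose hRS hR
  have hPAP : IsUnit (Pᵀ * A * P).det := hA.isUnit_det_transpose_mul_mul hRP
  have hSR : S * Sᵀ + Rᵀ * R = 1 :=
    mul_transpose_add_transpose_mul_eq_one ((finCongr hdim.symm).trans finSumFinEquiv.symm)
      hS hR hRS
  rw [galerkinProj_eq_one_sub_galerkinProj hP (isHermitian_iff_isSymm.mp hA.1) hSAS hPAP hSR]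
  exact (isIdempotentElem_galerkinProj hSAS).one_sub.mul_one_sub_self
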